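/- Let p ≥ 1 and g ≥ 1 be integers and let f ∈ Ω be monotone. Define the number of functional evaluations of the grouped-adaptive grid design after g refinement stages as m_GG(g) = 2^p + Σ_{l=1}^g card( G_l ∩ U(G_{l−1}, f) ), where card denotes cardinality. Then m_GG(g) ≤ 2^p + Σ_{l=1}^g p·(2^l + 1)^{p−1}. -/

import Mathlib

open MeasureTheory Set

/-- The uncertain region `U(D, f)` on the cube `[0,1]^p`. -/
def uncertainRegion (p : ℕ) (D : Set (Fin p → ℝ)) (f : (Fin p → ℝ) → ℝ) :
    Set (Fin p → ℝ) :=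
  Icc 0 1 \ ((⋃ x ∈ {y ∈ D | f y = -1}, Icc (0 : Fin p → ℝ) x) ∪
             (⋃ x ∈ {y ∈ D | f y = 1}, Icc x (1 : Fin p → ℝ)))

/-- `Ω`: monotone `{-1,1}`-valued functions on the cube `[0,1]^p`. -/
def OmegaSet (p : ℕ) : Set ((Fin p → ℝ) → ℝ) :=
  {f | MonotoneOn f (Icc 0 1) ∧ ∀ x ∈ Icc (0 : Fin p → ℝ) 1, f x = -1 ∨ f x = 1}

/-- The grid `{i/m : i = 0, 1, …, m}^p` with `(m+1)^p` points; `dyGrid p (2^l)` is the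
dyadic grid `G_l` with `(2^l + 1)^p` points. -/
def dyGrid (p m : ℕ) : Set (Fin p → ℝ) :=
  {x | ∀ k, ∃ i : ℕ, i ≤ m ∧ x k = (i : ℝ) / (m : ℝ)}

/-!
Write the points of `G_l` as `c / (2n)` with `c ∈ {0, …, 2n}^p` and `n = 2^(l-1)`. Halving `c`
and rounding its first `j` coordinates up and the others down gives points
`z_0 ≤ z_1 ≤ ⋯ ≤ z_p` of `G_{l-1}` with `z_0 ≤ c / (2n) ≤ z_p`. If `c / (2n)` is uncertain, then
`f z_0 = -1` and `f z_p = 1`, so `f` jumps from `z_i` to `z_{i+1}` for some axis `i`. Two uncertain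
points jumping at the same axis `i` cannot lie on a common line parallel to that axis: if `c`
is below `c'` on it, then `z_{i+1}(c) ≤ z_i(c')`, against monotonicity. Hence each of the `p`
classes has at most one point on each of the `(2n+1)^(p-1)` such lines.
-/

theorem ncard_le_pow_of_forall_ne_eq {p m : ℕ} {S : Set (Fin p → ℕ)}
    (hS : S ⊆ Iic (m : Fin p → ℕ)) (i : Fin p)
    (hline : ∀ c ∈ S, ∀ c' ∈ S, (∀ k ≠ i, c k = c' k) → c = c') :
    S.ncard ≤ (m + 1) ^ (p - 1) := by
  obtain ⟨q, rfl⟩ := Nat.exists_eq_succ_of_ne_zero i.pos.ne'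
  have hmaps : MapsTo i.removeNth S (Iic (m : Fin q → ℕ)) :=
    fun c hc k => hS hc (i.succAbove k)
  have hinj : InjOn i.removeNth S := by
    refine fun c hc c' hc' h => hline c hc c' hc' fun k hk => ?_
    obtain ⟨k, rfl⟩ := Fin.exists_succAbove_eq hk
    exact congrFun h k
  calc S.ncard ≤ (Iic (m : Fin q → ℕ)).ncard :=
        ncard_le_ncard_of_injOn _ hmaps hinj (finite_Iic _)
    _ = (m + 1) ^ q := by
        rw [ncard_eq_toFinset_card', Set.toFinset_Iic, Pi.card_Iic]; simp

def roundHalfStair {p : ℕ} (c : Fin p → ℕ) (j : ℕ) : Fin p → ℕ :=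
  fun k => if (k : ℕ) < j then (c k + 1) / 2 else c k / 2

section roundHalfStair

variable {p : ℕ} (c : Fin p → ℕ)

theorem two_mul_roundHalfStair_zero_le : 2 * roundHalfStair c 0 ≤ c := fun k => by
  simp only [roundHalfStair, Pi.mul_apply, Pi.ofNat_apply, Nat.not_lt_zero, if_false]
  omega

theorem le_two_mul_roundHalfStair : c ≤ 2 * roundHalfStair c p := fun k => by
  simp only [roundHalfStair, Pi.mul_apply, Pi.ofNat_apply, k.isLt, if_true]
  omega

variable {c}

theorem roundHalfStair_le {m : Fin p → ℕ} (h : c ≤ 2 * m) (j : ℕ) : roundHalfStair c j ≤ m :=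
  fun k => by
    have := h k
    simp only [roundHalfStair, Pi.mul_apply, Pi.ofNat_apply] at this ⊢
    split <;> omega

theorem roundHalfStair_succ_le {c' : Fin p → ℕ} {i : Fin p} (hoff : ∀ k ≠ i, c k = c' k)
    (hlt : c i < c' i) : roundHalfStair c (i + 1) ≤ roundHalfStair c' i := fun k => by
  simp only [roundHalfStair]
  rcases lt_trichotomy k i with h | rfl | h
  · rw [hoff k h.ne, if_pos (by omega), if_pos (by exact h)]
  · rw [if_pos (by omega), if_neg (lt_irrefl _)]
    omega
  · rw [hoff k h.ne', if_neg (by omega), if_neg (by exact h.not_gt)]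

theorem exists_not_roundHalfStair_and_succ {F : (Fin p → ℕ) → Prop}
    (h0 : ¬F (roundHalfStair c 0)) (hp : F (roundHalfStair c p)) :
    ∃ i : Fin p, ¬F (roundHalfStair c i) ∧ F (roundHalfStair c (i + 1)) := by
  classical
  have H : ∃ j, F (roundHalfStair c j) := ⟨p, hp⟩
  have hpos : 0 < Nat.find H := (Nat.find_pos H).mpr h0
  have hle : Nat.find H ≤ p := Nat.find_min' H hp
  refine ⟨⟨Nat.find H - 1, by omega⟩, Nat.find_min H (by simp only; omega), ?_⟩
  simpa only [Nat.sub_add_cancel hpos] using Nat.find_spec H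

end roundHalfStair

theorem ncard_le_of_roundHalfStair_crossing {p n : ℕ}
    {F : (Fin p → ℕ) → Prop} (hF : MonotoneOn F (Iic (n : Fin p → ℕ)))
    {C : Set (Fin p → ℕ)} (hC : C ⊆ Iic (2 * n : Fin p → ℕ))
    (h0 : ∀ c ∈ C, ¬F (roundHalfStair c 0)) (hp : ∀ c ∈ C, F (roundHalfStair c p)) :
    C.ncard ≤ p * (2 * n + 1) ^ (p - 1) := by
  set L : Fin p → Set (Fin p → ℕ) := fun i =>
    {c ∈ C | ¬F (roundHalfStair c i) ∧ F (roundHalfStair c (i + 1))}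
  have hcover : C ⊆ ⋃ i, L i := fun c hc => by
    obtain ⟨i, hi⟩ := exists_not_roundHalfStair_and_succ (h0 c hc) (hp c hc)
    exact mem_iUnion.mpr ⟨i, hc, hi⟩
  have hstair : ∀ c ∈ C, ∀ j, roundHalfStair c j ∈ Iic (n : Fin p → ℕ) :=
    fun c hc => roundHalfStair_le (hC hc)
  have hline : ∀ i, ∀ c ∈ L i, ∀ c' ∈ L i, (∀ k ≠ i, c k = c' k) → c i ≤ c' i := by
    intro i c hc c' hc' hoff
    by_contra! hlt
    exact hc.2.1 (hF (hstair c' hc'.1 _) (hstair c hc.1 _)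
      (roundHalfStair_succ_le (fun k hk => (hoff k hk).symm) hlt) hc'.2.2)
  have hL : ∀ i, (L i).ncard ≤ (2 * n + 1) ^ (p - 1) := fun i => by
    refine ncard_le_pow_of_forall_ne_eq (fun c hc => ?_) i fun c hc c' hc' hoff => ?_
    · simpa using hC hc.1
    · funext k
      rcases eq_or_ne k i with rfl | hk
      · exact (hline k c hc c' hc' hoff).antisymm
          (hline k c' hc' c hc fun k hk => (hoff k hk).symm)
      · exact hoff k hk
  have hfin : (⋃ i, L i).Finite :=
    ((finite_Iic _).subset hC).subset (iUnion_subset fun i _ hc => hc.1)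
  calc C.ncard ≤ (⋃ i, L i).ncard := ncard_le_ncard hcover hfin
    _ ≤ ∑ i, (L i).ncard := ncard_iUnion_le_of_fintype L
    _ ≤ ∑ _i : Fin p, (2 * n + 1) ^ (p - 1) := Finset.sum_le_sum fun i _ => hL i
    _ = p * (2 * n + 1) ^ (p - 1) := by simp

noncomputable def gridPoint {p : ℕ} (N : ℕ) (c : Fin p → ℕ) : Fin p → ℝ := fun k => c k / N

section gridPoint

variable {p : ℕ}

theorem gridPoint_mono (N : ℕ) : Monotone (gridPoint (p := p) N) := fun _ _ h k =>
  div_le_div_of_nonneg_right (Nat.cast_le.mpr (h k)) (Nat.cast_nonneg N)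

theorem gridPoint_two_mul (N : ℕ) (c : Fin p → ℕ) :
    gridPoint (2 * N) (2 * c) = gridPoint N c := by
  funext k
  simp only [gridPoint, Pi.mul_apply, Pi.ofNat_apply, Nat.cast_mul, Nat.cast_ofNat]
  exact mul_div_mul_left _ _ two_ne_zero

theorem gridPoint_mem_Icc {N : ℕ} {c : Fin p → ℕ} (h : c ≤ N) : gridPoint N c ∈ Icc 0 1 :=
  ⟨fun _ => div_nonneg (Nat.cast_nonneg _) (Nat.cast_nonneg _),
    fun k => div_le_one_of_le₀ (Nat.cast_le.mpr (h k)) (Nat.cast_nonneg N)⟩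

theorem dyGrid_eq_image (N : ℕ) : dyGrid p N = gridPoint N '' Iic (N : Fin p → ℕ) := by
  ext x
  constructor
  · intro hx
    choose c hc hx using hx
    exact ⟨c, hc, funext fun k => (hx k).symm⟩
  · rintro ⟨c, hc, rfl⟩ k
    exact ⟨c k, hc k, rfl⟩

end gridPoint

theorem eq_one_of_le_of_mem_OmegaSet {p : ℕ} {f : (Fin p → ℝ) → ℝ} (hf : f ∈ OmegaSet p)
    {x y : Fin p → ℝ} (hx : x ∈ Icc 0 1) (hy : y ∈ Icc 0 1) (hxy : x ≤ y) (h : f x = 1) :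
    f y = 1 := by
  have hle := hf.1 hx hy hxy
  rcases hf.2 y hy with h' | h'
  · rw [h, h'] at hle
    norm_num at hle
  · exact h'

section uncertainRegion

variable {p : ℕ} {D : Set (Fin p → ℝ)} {f : (Fin p → ℝ) → ℝ} {x y : Fin p → ℝ}

theorem ne_one_of_le_of_mem_uncertainRegion (hx : x ∈ uncertainRegion p D f) (hy : y ∈ D)
    (hyx : y ≤ x) : f y ≠ 1 :=
  fun h => hx.2 (Or.inr (mem_biUnion ⟨hy, h⟩ ⟨hyx, hx.1.2⟩))

theorem ne_neg_one_of_le_of_mem_uncertainRegion (hx : x ∈ uncertainRegion p D f) (hy : y ∈ D)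
    (hxy : x ≤ y) : f y ≠ -1 :=
  fun h => hx.2 (Or.inl (mem_biUnion ⟨hy, h⟩ ⟨hx.1.1, hxy⟩))

end uncertainRegion

theorem ncard_dyGrid_inter_uncertainRegion_le {p : ℕ} (n : ℕ) {f : (Fin p → ℝ) → ℝ}
    (hf : f ∈ OmegaSet p) :
    (dyGrid p (2 * n) ∩ uncertainRegion p (dyGrid p n) f).ncard ≤ p * (2 * n + 1) ^ (p - 1) := by
  set F : (Fin p → ℕ) → Prop := fun d => f (gridPoint n d) = 1
  have hF : MonotoneOn F (Iic n) := fun d hd d' hd' h =>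
    eq_one_of_le_of_mem_OmegaSet hf (gridPoint_mem_Icc hd) (gridPoint_mem_Icc hd')
      (gridPoint_mono n h)
  set C := {c ∈ Iic (2 * n : Fin p → ℕ) | ¬F (roundHalfStair c 0) ∧ F (roundHalfStair c p)}
  have hC : C.Finite := (finite_Iic _).subset (sep_subset _ _)
  have hsub : dyGrid p (2 * n) ∩ uncertainRegion p (dyGrid p n) f ⊆ gridPoint (2 * n) '' C := by
    rintro _ ⟨hx, hU⟩
    rw [dyGrid_eq_image] at hx
    obtain ⟨c, hc, rfl⟩ := hx
    have hc2 : c ≤ 2 * (n : Fin p → ℕ) := by simpa using hc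
    have hgrid : ∀ j, gridPoint n (roundHalfStair c j) ∈ dyGrid p n := fun j => by
      rw [dyGrid_eq_image]
      exact mem_image_of_mem _ (roundHalfStair_le hc2 j)
    refine ⟨c, ⟨hc2, ?_, ?_⟩, rfl⟩
    · refine ne_one_of_le_of_mem_uncertainRegion hU (hgrid 0) ?_
      rw [← gridPoint_two_mul n]
      exact gridPoint_mono _ (two_mul_roundHalfStair_zero_le c)
    · refine (hf.2 _ (gridPoint_mem_Icc (roundHalfStair_le hc2 p))).resolve_left
        (ne_neg_one_of_le_of_mem_uncertainRegion hU (hgrid p) ?_)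
      rw [← gridPoint_two_mul n (roundHalfStair c p)]
      exact gridPoint_mono _ (le_two_mul_roundHalfStair c)
  calc _ ≤ (gridPoint (2 * n) '' C).ncard := ncard_le_ncard hsub (hC.image _)
    _ ≤ C.ncard := ncard_image_le hC
    _ ≤ p * (2 * n + 1) ^ (p - 1) :=
      ncard_le_of_roundHalfStair_crossing hF (sep_subset _ _)
        (fun _ hc => hc.2.1) (fun _ hc => hc.2.2)

theorem grouped_adaptive_grid_eval_bound_general (p g : ℕ)
    (f : (Fin p → ℝ) → ℝ) (hf : f ∈ OmegaSet p) :
    2 ^ p + ∑ l ∈ Finset.Icc 1 g,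
        (dyGrid p (2 ^ l) ∩ uncertainRegion p (dyGrid p (2 ^ (l - 1))) f).ncard
      ≤ 2 ^ p + ∑ l ∈ Finset.Icc 1 g, p * (2 ^ l + 1) ^ (p - 1) := by
  gcongr with l hl
  obtain ⟨l, rfl⟩ := Nat.exists_eq_add_of_le' (Finset.mem_Icc.mp hl).1
  rw [Nat.add_sub_cancel, pow_succ']
  exact ncard_dyGrid_inter_uncertainRegion_le _ hf

/-- Theorem 3: the number of functional evaluations of the grouped-adaptive grid design
after `g` stages, `m_GG(g) = 2^p + Σ_{l=1}^g card(G_l ∩ U(G_{l-1}, f))`, is at most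
`2^p + Σ_{l=1}^g p (2^l + 1)^(p-1)`. -/
theorem grouped_adaptive_grid_eval_bound (p g : ℕ) (hp : 1 ≤ p) (hg : 1 ≤ g)
    (f : (Fin p → ℝ) → ℝ) (hf : f ∈ OmegaSet p) :
    2 ^ p + ∑ l ∈ Finset.Icc 1 g,
        (dyGrid p (2 ^ l) ∩ uncertainRegion p (dyGrid p (2 ^ (l - 1))) f).ncard
      ≤ 2 ^ p + ∑ l ∈ Finset.Icc 1 g, p * (2 ^ l + 1) ^ (p - 1) :=
  grouped_adaptive_grid_eval_bound_general p g f hf
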